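/- arXiv:1612.00928 — 8 statements merged into one kernel-verified Lean document; each statement's English description precedes it below -/
import Mathlib

section
/- (Theorem 1, informed truthfulness of CAH.) Fix m ≥ 3 tasks and n ≥ 1 signals with distributions P_k as in the setting. Suppose that for every task b the CAH delta matrix Δ_b is symmetric and every entry of Δ_b is nonzero. Then for all deterministic strategies F, G : Fin n → Fin n, E(𝕀,𝕀) ≥ E(F,G); and if F is a constant map (an uninformed strategy) then E(F,G) < E(𝕀,𝕀) for every G. -/
/-!
Scoring a pair of reports `(x, y)` by `[0 < Δ_b x y]` earns `Δ_b i j` at most its positive part,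
and the truthful strategy earns exactly the positive part, so it is optimal. Each `Δ_b` has total
sum zero, since `P_b` and every product of marginals are probability distributions and
`(m - 1)(m - 2)` counts the ordered pairs of distinct tasks other than `b`. A symmetric
matrix with zero sum and no zero entries has a column with entries of both signs; an uninformed
agent scores all entries of that column with the same bit, which is strictly worse than taking
their positive parts.
-/

open Finset

section PositivePart

lemma mul_ite_pos_le_posPart (a c : ℝ) : a * (if 0 < c then 1 else 0) ≤ a⁺ := by
  split_ifs
  · simpa using le_posPart a
  · simp

lemma mul_ite_pos_self (a : ℝ) : a * (if 0 < a then 1 else 0) = a⁺ := by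
  rw [posPart_eq_ite_lt]
  split_ifs <;> simp

variable {ι : Type*} [Fintype ι]

lemma sum_mul_ite_pos_lt_sum_posPart {v : ι → ℝ} (hpos : ∃ i, 0 < v i) (hneg : ∃ i, v i < 0)
    (c : ℝ) : (∑ i, v i) * (if 0 < c then 1 else 0) < ∑ i, (v i)⁺ := by
  obtain ⟨ip, hip⟩ := hpos
  obtain ⟨iq, hiq⟩ := hneg
  split_ifs
  · rw [mul_one]
    exact sum_lt_sum (fun i _ => le_posPart _) ⟨iq, mem_univ _, hiq.trans_le (posPart_nonneg _)⟩
  · rw [mul_zero]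
    exact sum_pos' (fun i _ => posPart_nonneg _) ⟨ip, mem_univ _, posPart_pos hip⟩

end PositivePart

section ScoreMatrix

variable {ι : Type*} [Fintype ι] (A : ι → ι → ℝ)

lemma sum_mul_ite_pos_le_sum_posPart (F G : ι → ι) :
    ∑ i, ∑ j, A i j * (if 0 < A (F i) (G j) then 1 else 0) ≤ ∑ i, ∑ j, (A i j)⁺ :=
  sum_le_sum fun _ _ => sum_le_sum fun _ _ => mul_ite_pos_le_posPart _ _

lemma sum_mul_ite_pos_self :
    ∑ i, ∑ j, A i j * (if 0 < A i j then 1 else 0) = ∑ i, ∑ j, (A i j)⁺ := by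
  simp only [mul_ite_pos_self]

lemma sum_mul_ite_pos_const_lt_sum_posPart (r : ι) (G : ι → ι)
    (hcol : ∃ j, (∃ i, 0 < A i j) ∧ ∃ i, A i j < 0) :
    ∑ i, ∑ j, A i j * (if 0 < A r (G j) then 1 else 0) < ∑ i, ∑ j, (A i j)⁺ := by
  obtain ⟨j₀, hpos, hneg⟩ := hcol
  rw [sum_comm, sum_comm (f := fun i j => (A i j)⁺)]
  simp only [← sum_mul]
  refine sum_lt_sum (fun j _ => ?_) ⟨j₀, mem_univ _, sum_mul_ite_pos_lt_sum_posPart hpos hneg _⟩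
  rw [sum_mul]
  exact sum_le_sum fun i _ => mul_ite_pos_le_posPart _ _

lemma exists_col_pos_neg_of_symm [Nonempty ι] (hsymm : ∀ i j, A i j = A j i)
    (hnz : ∀ i j, A i j ≠ 0) (hsum : ∑ i, ∑ j, A i j = 0) :
    ∃ j, (∃ i, 0 < A i j) ∧ ∃ i, A i j < 0 := by
  rw [← Fintype.sum_prod_type'] at hsum
  obtain ⟨⟨ip, jp⟩, -, hp⟩ := exists_pos_of_sum_zero_of_exists_nonzero _ hsum
    ⟨⟨Classical.arbitrary ι, Classical.arbitrary ι⟩, mem_univ _, hnz _ _⟩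
  have hsum_neg : ∑ x : ι × ι, -A x.1 x.2 = 0 := by rw [sum_neg_distrib, hsum, neg_zero]
  obtain ⟨⟨iq, jq⟩, -, hq⟩ := exists_pos_of_sum_zero_of_exists_nonzero _ hsum_neg
    ⟨⟨ip, jp⟩, mem_univ _, neg_ne_zero.mpr (hnz _ _)⟩
  by_contra! hcon
  -- The positive entry at `(ip, jp)` makes column `jp`, hence by symmetry row `jp`, positive;
  -- then column `jq` has a positive entry, contradicting `A iq jq < 0`.
  have h_jq_jp : 0 < A jq jp := (hcon jp ⟨ip, hp⟩ jq).lt_of_ne' (hnz _ _)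
  have h_iq_jq : 0 ≤ A iq jq := hcon jq ⟨jp, hsymm jp jq ▸ h_jq_jp⟩ iq
  exact (neg_pos.mp hq).not_ge h_iq_jq

end ScoreMatrix

lemma sum_sum_boole_distinct_ne_eq {m : ℕ} (b : Fin m) :
    ∑ t' : Fin m, ∑ t'' : Fin m, (if t' ≠ t'' ∧ t' ≠ b ∧ t'' ≠ b then (1 : ℝ) else 0)
      = ((m : ℝ) - 1) * ((m : ℝ) - 2) := by
  have hpairs : ({x | x.1 ≠ x.2 ∧ x.1 ≠ b ∧ x.2 ≠ b} : Finset (Fin m × Fin m))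
      = (univ.erase b).offDiag := by
    ext ⟨t', t''⟩
    simp [and_comm, and_left_comm]
  have hcard : ((#(univ.erase b) : ℕ) : ℝ) = m - 1 := by
    rw [card_erase_of_mem (mem_univ b), card_univ, Fintype.card_fin,
      Nat.cast_sub (Fin.pos b), Nat.cast_one]
  rw [← Fintype.sum_prod_type', sum_boole, hpairs, offDiag_card,
    Nat.cast_sub (Nat.le_mul_self _), Nat.cast_mul, hcard]
  ring

lemma sum_sum_ite_mul_of_sum_eq_one {τ ι κ : Type*} [Fintype τ] [Fintype ι] [Fintype κ]
    (p : τ → τ → Prop) [DecidableRel p] {L : τ → ι → ℝ} {R : τ → κ → ℝ}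
    (hL : ∀ t, ∑ i, L t i = 1) (hR : ∀ t, ∑ j, R t j = 1) :
    ∑ i, ∑ j, ∑ t', ∑ t'', (if p t' t'' then L t' i * R t'' j else 0)
      = ∑ t', ∑ t'', (if p t' t'' then (1 : ℝ) else 0) := by
  have hpair : ∀ t' t'', ∑ i, ∑ j, (if p t' t'' then L t' i * R t'' j else 0)
      = if p t' t'' then (1 : ℝ) else 0 := by
    intro t' t''
    split_ifs
    · rw [← sum_mul_sum, hL, hR, one_mul]
    · simp
  simp_rw [← hpair, sum_comm (γ := κ), sum_comm (γ := ι)]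

theorem cah_informed_truthful_general (m n : ℕ) (hm : 3 ≤ m) (hn : 1 ≤ n)
    (P : Fin m → Fin n → Fin n → ℝ)
    (hPsum : ∀ k, ∑ i, ∑ j, P k i j = 1)
    (margL : Fin m → Fin n → ℝ) (margR : Fin m → Fin n → ℝ)
    (hmargL : ∀ k i, margL k i = ∑ j, P k i j)
    (hmargR : ∀ k j, margR k j = ∑ i, P k i j)
    (Δ : Fin m → Fin n → Fin n → ℝ)
    (hΔ : ∀ b i j, Δ b i j = P b i j -
      (1 / (((m : ℝ) - 1) * ((m : ℝ) - 2))) *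
        ∑ t' : Fin m, ∑ t'' : Fin m,
          if t' ≠ t'' ∧ t' ≠ b ∧ t'' ≠ b then margL t' i * margR t'' j else 0)
    (S : Fin m → Fin n → Fin n → ℝ)
    (hS : ∀ b i j, S b i j = if 0 < Δ b i j then 1 else 0)
    (E : (Fin n → Fin n) → (Fin n → Fin n) → ℝ)
    (hE : ∀ F G, E F G =
      (1 / (m : ℝ)) * ∑ b, ∑ i, ∑ j, Δ b i j * S b (F i) (G j))
    (hΔsymm : ∀ b i j, Δ b i j = Δ b j i)
    (hΔnz : ∀ b i j, Δ b i j ≠ 0) :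
    (∀ F G : Fin n → Fin n, E F G ≤ E id id) ∧
    (∀ F G : Fin n → Fin n, (∃ r, ∀ i, F i = r) → E F G < E id id) := by
  have hm₀ : ((m : ℝ) - 1) * ((m : ℝ) - 2) ≠ 0 := by
    have : (3 : ℝ) ≤ m := by exact_mod_cast hm
    exact mul_ne_zero (by linarith) (by linarith)
  have hL : ∀ k, ∑ i, margL k i = 1 := fun k => by simp only [hmargL, hPsum]
  have hR : ∀ k, ∑ j, margR k j = 1 := fun k => by simp only [hmargR]; rw [sum_comm, hPsum]
  have hsum : ∀ b, ∑ i, ∑ j, Δ b i j = 0 := fun b => by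
    simp only [hΔ, sum_sub_distrib, ← mul_sum]
    rw [hPsum, sum_sum_ite_mul_of_sum_eq_one _ hL hR, sum_sum_boole_distinct_ne_eq,
      one_div_mul_cancel hm₀, sub_self]
  have hEid : E id id = 1 / (m : ℝ) * ∑ b, ∑ i, ∑ j, (Δ b i j)⁺ := by
    simp only [hE, hS, id, sum_mul_ite_pos_self]
  have : Nonempty (Fin n) := ⟨⟨0, hn⟩⟩
  have hm_inv : 0 < 1 / (m : ℝ) := one_div_pos.mpr (Nat.cast_pos.mpr (by omega))
  refine ⟨fun F G => ?_, fun F G ⟨r, hF⟩ => ?_⟩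
  · rw [hE, hEid]
    refine mul_le_mul_of_nonneg_left (sum_le_sum fun b _ => ?_) hm_inv.le
    simpa only [hS] using sum_mul_ite_pos_le_sum_posPart (Δ b) F G
  · obtain rfl : F = fun _ => r := funext hF
    have b₀ : Fin m := ⟨0, by omega⟩
    rw [hE, hEid]
    refine mul_lt_mul_of_pos_left (sum_lt_sum (fun b _ => ?_) ⟨b₀, mem_univ _, ?_⟩) hm_inv
    · simpa only [hS] using sum_mul_ite_pos_le_sum_posPart (Δ b) _ G
    · simpa only [hS] using sum_mul_ite_pos_const_lt_sum_posPart (Δ b₀) r G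
        (exists_col_pos_neg_of_symm _ (hΔsymm b₀) (hΔnz b₀) (hsum b₀))

/-- Theorem 1: informed truthfulness of the CAH mechanism. -/
theorem cah_informed_truthful (m n : ℕ) (hm : 3 ≤ m) (hn : 1 ≤ n)
    (P : Fin m → Fin n → Fin n → ℝ)
    (hPnonneg : ∀ k i j, 0 ≤ P k i j)
    (hPsum : ∀ k, ∑ i, ∑ j, P k i j = 1)
    (margL : Fin m → Fin n → ℝ) (margR : Fin m → Fin n → ℝ)
    (hmargL : ∀ k i, margL k i = ∑ j, P k i j)
    (hmargR : ∀ k j, margR k j = ∑ i, P k i j)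
    (Δ : Fin m → Fin n → Fin n → ℝ)
    (hΔ : ∀ b i j, Δ b i j = P b i j -
      (1 / (((m : ℝ) - 1) * ((m : ℝ) - 2))) *
        ∑ t' : Fin m, ∑ t'' : Fin m,
          if t' ≠ t'' ∧ t' ≠ b ∧ t'' ≠ b then margL t' i * margR t'' j else 0)
    (S : Fin m → Fin n → Fin n → ℝ)
    (hS : ∀ b i j, S b i j = if 0 < Δ b i j then 1 else 0)
    (E : (Fin n → Fin n) → (Fin n → Fin n) → ℝ)
    (hE : ∀ F G, E F G =
      (1 / (m : ℝ)) * ∑ b, ∑ i, ∑ j, Δ b i j * S b (F i) (G j))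
    (hΔsymm : ∀ b i j, Δ b i j = Δ b j i)
    (hΔnz : ∀ b i j, Δ b i j ≠ 0) :
    (∀ F G : Fin n → Fin n, E F G ≤ E id id) ∧
    (∀ F G : Fin n → Fin n, (∃ r, ∀ i, F i = r) → E F G < E id id) :=
  cah_informed_truthful_general m n hm hn P hPsum margL margR hmargL hmargR Δ hΔ S hS E hE hΔsymm
    hΔnz
end

section
/- (Theorem 2, strong truthfulness of CAH.) Fix m ≥ 3 tasks and n ≥ 1 signals with distributions P_k as in the setting, and suppose Condition 1 holds: Δ_b(i,i) > 0 for every task b and every signal i, and Σ_{b ∈ Fin m} Δ_b(i,j) < 0 for all i ≠ j. Then for all deterministic strategies F, G : Fin n → Fin n, E(F,G) ≤ E(𝕀,𝕀), and if E(F,G) = E(𝕀,𝕀) then F = G and F is a bijection (a permutation strategy). -/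
/-!
Each score entry `S_b(i, j)` is the indicator of `Δ_b(i, j) > 0`, so the truthful report collects
every positive entry of every `Δ_b` and no negative one; any other pair of strategies can only do
worse, term by term. Equality therefore forces every term to agree: positive entries of `Δ_b` must
be sent to positive entries and negative ones to non-positive ones. The diagonal entries are
positive, so `Δ_b(F i, G i) > 0` for every task `b`, which rules out `F i ≠ G i` because
off-diagonal entries have negative sum over the tasks. If `F i = F i'` with `i ≠ i'`, some
`Δ_b(i, i')` is negative and is sent to the positive diagonal entry `Δ_b(F i, F i)`.
-/

open Finset

namespace CAH

variable {ι α : Type*} (Δ : ι → α → α → ℝ)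

noncomputable def scoreMatrix (b : ι) (x y : α) : ℝ := if 0 < Δ b x y then 1 else 0

noncomputable def totalScore [Fintype ι] [Fintype α] (F G : α → α) : ℝ :=
  ∑ b, ∑ i, ∑ j, Δ b i j * scoreMatrix Δ b (F i) (G j)

theorem mul_scoreMatrix_le (b : ι) (i j x y : α) :
    Δ b i j * scoreMatrix Δ b x y ≤ Δ b i j * scoreMatrix Δ b i j := by
  unfold scoreMatrix
  split_ifs <;> linarith

variable [Fintype ι] [Fintype α]

theorem totalScore_le_id (F G : α → α) : totalScore Δ F G ≤ totalScore Δ id id :=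
  sum_le_sum fun b _ => sum_le_sum fun i _ => sum_le_sum fun j _ => mul_scoreMatrix_le Δ b i j _ _

variable {Δ} {F G : α → α}

theorem mul_scoreMatrix_eq_of_totalScore_eq (h : totalScore Δ F G = totalScore Δ id id)
    (b : ι) (i j : α) :
    Δ b i j * scoreMatrix Δ b (F i) (G j) = Δ b i j * scoreMatrix Δ b i j := by
  simp only [totalScore, id, ← Fintype.sum_prod_type'] at h
  exact (sum_eq_sum_iff_of_le fun x _ => mul_scoreMatrix_le Δ x.1 x.2.1 x.2.2 _ _).1 h
    (b, i, j) (mem_univ _)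

theorem pos_of_totalScore_eq (h : totalScore Δ F G = totalScore Δ id id) {b : ι} {i j : α}
    (hpos : 0 < Δ b i j) : 0 < Δ b (F i) (G j) := by
  have := mul_scoreMatrix_eq_of_totalScore_eq h b i j
  unfold scoreMatrix at this
  split_ifs at this with hFG <;> simp_all

theorem nonpos_of_totalScore_eq (h : totalScore Δ F G = totalScore Δ id id) {b : ι} {i j : α}
    (hneg : Δ b i j < 0) : Δ b (F i) (G j) ≤ 0 := by
  have := mul_scoreMatrix_eq_of_totalScore_eq h b i j
  unfold scoreMatrix at this
  split_ifs at this <;> linarith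

theorem eq_of_totalScore_eq [Nonempty ι] (hdiag : ∀ b i, 0 < Δ b i i)
    (hoff : ∀ i j, i ≠ j → ∑ b, Δ b i j < 0) (h : totalScore Δ F G = totalScore Δ id id) :
    F = G := by
  funext i
  by_contra hne
  have hsum_pos : 0 < ∑ b, Δ b (F i) (G i) :=
    sum_pos (fun b _ => pos_of_totalScore_eq h (hdiag b i)) univ_nonempty
  exact (hoff _ _ hne).not_gt hsum_pos

theorem injective_of_totalScore_eq (hdiag : ∀ b i, 0 < Δ b i i)
    (hoff : ∀ i j, i ≠ j → ∑ b, Δ b i j < 0) (h : totalScore Δ F F = totalScore Δ id id) :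
    Function.Injective F := by
  intro i i' hFi
  by_contra hne
  obtain ⟨b, hb⟩ : ∃ b, Δ b i i' < 0 := by
    by_contra! hall
    exact (hoff i i' hne).not_ge (sum_nonneg fun b _ => hall b)
  have := nonpos_of_totalScore_eq h hb
  rw [← hFi] at this
  exact this.not_gt (hdiag b (F i))

end CAH

open CAH in
theorem cah_strong_truthful_general (m n : ℕ) (hm : 3 ≤ m)
    (Δ : Fin m → Fin n → Fin n → ℝ)
    (S : Fin m → Fin n → Fin n → ℝ)
    (hS : ∀ b i j, S b i j = if 0 < Δ b i j then 1 else 0)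
    (E : (Fin n → Fin n) → (Fin n → Fin n) → ℝ)
    (hE : ∀ F G, E F G =
      (1 / (m : ℝ)) * ∑ b, ∑ i, ∑ j, Δ b i j * S b (F i) (G j))
    (hdiag : ∀ b i, 0 < Δ b i i)
    (hoff : ∀ i j, i ≠ j → ∑ b, Δ b i j < 0) :
    ∀ F G : Fin n → Fin n,
      E F G ≤ E id id ∧ (E F G = E id id → F = G ∧ Function.Bijective F) := by
  have hS : S = scoreMatrix Δ := funext₃ hS
  have hE : E = fun F G => 1 / (m : ℝ) * totalScore Δ F G := by
    funext F G
    rw [hE, hS, totalScore]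
  have : NeZero m := ⟨by omega⟩
  have hweight : 0 < 1 / (m : ℝ) := by positivity
  intro F G
  subst hE
  refine ⟨mul_le_mul_of_nonneg_left (totalScore_le_id Δ F G) hweight.le, fun hE => ?_⟩
  have htotal := mul_left_cancel₀ hweight.ne' hE
  obtain rfl := eq_of_totalScore_eq hdiag hoff htotal
  exact ⟨rfl, Finite.injective_iff_bijective.mp (injective_of_totalScore_eq hdiag hoff htotal)⟩

/-- Theorem 2: strong truthfulness of the CAH mechanism under Condition 1. -/
theorem cah_strong_truthful (m n : ℕ) (hm : 3 ≤ m) (hn : 1 ≤ n)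
    (P : Fin m → Fin n → Fin n → ℝ)
    (hPnonneg : ∀ k i j, 0 ≤ P k i j)
    (hPsum : ∀ k, ∑ i, ∑ j, P k i j = 1)
    (margL : Fin m → Fin n → ℝ) (margR : Fin m → Fin n → ℝ)
    (hmargL : ∀ k i, margL k i = ∑ j, P k i j)
    (hmargR : ∀ k j, margR k j = ∑ i, P k i j)
    (Δ : Fin m → Fin n → Fin n → ℝ)
    (hΔ : ∀ b i j, Δ b i j = P b i j -
      (1 / (((m : ℝ) - 1) * ((m : ℝ) - 2))) *
        ∑ t' : Fin m, ∑ t'' : Fin m,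
          if t' ≠ t'' ∧ t' ≠ b ∧ t'' ≠ b then margL t' i * margR t'' j else 0)
    (S : Fin m → Fin n → Fin n → ℝ)
    (hS : ∀ b i j, S b i j = if 0 < Δ b i j then 1 else 0)
    (E : (Fin n → Fin n) → (Fin n → Fin n) → ℝ)
    (hE : ∀ F G, E F G =
      (1 / (m : ℝ)) * ∑ b, ∑ i, ∑ j, Δ b i j * S b (F i) (G j))
    (hdiag : ∀ b i, 0 < Δ b i i)
    (hoff : ∀ i j, i ≠ j → ∑ b, Δ b i j < 0) :
    ∀ F G : Fin n → Fin n,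
      E F G ≤ E id id ∧ (E F G = E id id → F = G ∧ Function.Bijective F) :=
  cah_strong_truthful_general m n hm Δ S hS E hE hdiag hoff
end

section
/- Let Δ_b : Fin n → Fin n → ℝ for b ∈ Fin m be any family of real matrices satisfying Condition 1: Δ_b(i,i) > 0 for every b and i, and Σ_b Δ_b(i,j) < 0 for all i ≠ j. Let S_b(i,j) = 1 if Δ_b(i,j) > 0 and 0 otherwise, and E(F,G) = (1/m) Σ_b Σ_{i,j} Δ_b(i,j) · S_b(F(i),G(j)). If F, G : Fin n → Fin n are maps with F(i) ≠ G(i) for some i, then E(F,G) < E(𝕀,𝕀), where 𝕀 is the identity map. -/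
/-!
Each term `Δ_b(i,j) · S_b(F i, G j)` is at most `Δ_b(i,j) · S_b(i,j) = max(Δ_b(i,j), 0)`,
so truth-telling maximises every term. If `F i₀ ≠ G i₀`, the negative sum
`Σ_b Δ_b(F i₀, G i₀)` provides a signal `b₀` with `S_{b₀}(F i₀, G i₀) = 0`, and then the
term `(b₀, i₀, i₀)` loses the positive amount `Δ_{b₀}(i₀, i₀)`.
-/

open Finset

theorem mul_ite_pos_le_mul_ite_pos_self {α : Type*} [MulZeroOneClass α] [LinearOrder α]
    (x y : α) :
    x * (if 0 < y then 1 else 0) ≤ x * (if 0 < x then 1 else 0) := by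
  split_ifs <;> simp only [mul_one, mul_zero, le_refl] <;> order

section Payoff

variable {α β ι : Type*} [Ring α] [LinearOrder α] [IsStrictOrderedRing α]
  [Fintype β] [Fintype ι]

/-- The unnormalised expected payoff `m · E(F, G)` of the strategy pair `(F, G)`. -/
def payoff (Δ : β → ι → ι → α) (F G : ι → ι) : α :=
  ∑ b, ∑ i, ∑ j, Δ b i j * if 0 < Δ b (F i) (G j) then 1 else 0

theorem payoff_lt_payoff_id {Δ : β → ι → ι → α} {F G : ι → ι} {b₀ : β} {i₀ : ι}
    (hdiag : 0 < Δ b₀ i₀ i₀) (hb₀ : ¬0 < Δ b₀ (F i₀) (G i₀)) :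
    payoff Δ F G < payoff Δ id id := by
  have hle : ∀ b i j, Δ b i j * (if 0 < Δ b (F i) (G j) then 1 else 0) ≤
      Δ b i j * if 0 < Δ b i j then 1 else 0 :=
    fun b i j => mul_ite_pos_le_mul_ite_pos_self _ _
  have hlt : Δ b₀ i₀ i₀ * (if 0 < Δ b₀ (F i₀) (G i₀) then 1 else 0) <
      Δ b₀ i₀ i₀ * if 0 < Δ b₀ i₀ i₀ then 1 else 0 := by
    simp [hb₀, hdiag]
  refine sum_lt_sum (fun b _ => sum_le_sum fun i _ => sum_le_sum fun j _ => hle b i j)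
    ⟨b₀, mem_univ _, sum_lt_sum (fun i _ => sum_le_sum fun j _ => hle b₀ i j)
      ⟨i₀, mem_univ _, sum_lt_sum (fun j _ => hle b₀ i₀ j) ⟨i₀, mem_univ _, hlt⟩⟩⟩

end Payoff

theorem cond1_asymmetric_strict_general (m n : ℕ)
    (Δ : Fin m → Fin n → Fin n → ℝ)
    (hdiag : ∀ b i, 0 < Δ b i i)
    (hoff : ∀ i j, i ≠ j → ∑ b, Δ b i j < 0)
    (S : Fin m → Fin n → Fin n → ℝ)
    (hS : ∀ b i j, S b i j = if 0 < Δ b i j then 1 else 0)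
    (E : (Fin n → Fin n) → (Fin n → Fin n) → ℝ)
    (hE : ∀ F G, E F G =
      (1 / (m : ℝ)) * ∑ b, ∑ i, ∑ j, Δ b i j * S b (F i) (G j))
    (F G : Fin n → Fin n) (hFG : ∃ i, F i ≠ G i) :
    E F G < E id id := by
  obtain ⟨i₀, hi₀⟩ := hFG
  obtain ⟨b₀, -, hb₀⟩ : ∃ b ∈ univ, Δ b (F i₀) (G i₀) < 0 :=
    exists_lt_of_sum_lt (by simpa using hoff _ _ hi₀)
  have hE_payoff : ∀ F G, E F G = (1 / (m : ℝ)) * payoff Δ F G := fun F G => by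
    simp only [hE, hS, payoff]
  have hm : (0 : ℝ) < 1 / m := by simpa using b₀.pos
  rw [hE_payoff, hE_payoff]
  exact mul_lt_mul_of_pos_left (payoff_lt_payoff_id (hdiag b₀ i₀) hb₀.not_gt) hm

/-- Asymmetric-strategies case in the proof of Theorem 2: under Condition 1,
any pair of strategies disagreeing on some signal is strictly worse than truth. -/
theorem cond1_asymmetric_strict (m n : ℕ) (hm : 1 ≤ m)
    (Δ : Fin m → Fin n → Fin n → ℝ)
    (hdiag : ∀ b i, 0 < Δ b i i)
    (hoff : ∀ i j, i ≠ j → ∑ b, Δ b i j < 0)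
    (S : Fin m → Fin n → Fin n → ℝ)
    (hS : ∀ b i j, S b i j = if 0 < Δ b i j then 1 else 0)
    (E : (Fin n → Fin n) → (Fin n → Fin n) → ℝ)
    (hE : ∀ F G, E F G =
      (1 / (m : ℝ)) * ∑ b, ∑ i, ∑ j, Δ b i j * S b (F i) (G j))
    (F G : Fin n → Fin n) (hFG : ∃ i, F i ≠ G i) :
    E F G < E id id :=
  cond1_asymmetric_strict_general m n Δ hdiag hoff S hS E hE F G hFG
end

section
/- Let Δ_b : Fin n → Fin n → ℝ for b ∈ Fin m be any family of real matrices satisfying Condition 1: Δ_b(i,i) > 0 for every b and i, and Σ_b Δ_b(i,j) < 0 for all i ≠ j. Let S_b(i,j) = 1 if Δ_b(i,j) > 0 and 0 otherwise, and E(F,G) = (1/m) Σ_b Σ_{i,j} Δ_b(i,j) · S_b(F(i),G(j)). If F : Fin n → Fin n is not injective, then E(F,F) < E(𝕀,𝕀), where 𝕀 is the identity map. -/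
/-!
Swap the order of summation so that, for each pair `(i, j)`, the sum over `b` is compared.
Since `Δ_b(i,j) · S_b(k,l) ≤ Δ_b(i,j) · S_b(i,j) = max (Δ_b(i,j)) 0` for every `k, l`, each
pair `(i, j)` contributes at most as much under `F` as under the identity. If `F i = F j` with
`i ≠ j`, then `S_b(F i, F j) = 1` for every `b` by the positive diagonal, so this pair contributes
`Σ_b Δ_b(i,j) < 0` under `F`, against a nonnegative contribution under the identity.
-/

open Finset

theorem mul_le_mul_ite_pos {α : Type*} [Ring α] [LinearOrder α] [IsStrictOrderedRing α]
    {d s : α} (hs₀ : 0 ≤ s) (hs₁ : s ≤ 1) : d * s ≤ d * if 0 < d then 1 else 0 := by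
  split_ifs with hd
  · simpa using mul_le_of_le_one_right hd.le hs₁
  · simpa using mul_nonpos_of_nonpos_of_nonneg (not_lt.mp hd) hs₀

section

variable {ι κ : Type*} [Fintype ι] (Δ : ι → κ → κ → ℝ)

noncomputable def payoffSum [Fintype κ] (F G : κ → κ) : ℝ :=
  ∑ b, ∑ i, ∑ j, Δ b i j * if 0 < Δ b (F i) (G j) then 1 else 0

theorem sum_mul_ite_pos_le (i j k l : κ) :
    ∑ b, (Δ b i j * if 0 < Δ b k l then 1 else 0) ≤
      ∑ b, Δ b i j * if 0 < Δ b i j then 1 else 0 :=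
  sum_le_sum fun b _ => mul_le_mul_ite_pos (by split_ifs <;> norm_num) (by split_ifs <;> norm_num)

theorem sum_mul_ite_pos_lt_of_ne (hdiag : ∀ b i, 0 < Δ b i i)
    (hoff : ∀ i j, i ≠ j → ∑ b, Δ b i j < 0) {i j : κ} (hij : i ≠ j) (k : κ) :
    ∑ b, (Δ b i j * if 0 < Δ b k k then 1 else 0) <
      ∑ b, Δ b i j * if 0 < Δ b i j then 1 else 0 :=
  calc ∑ b, (Δ b i j * if 0 < Δ b k k then 1 else 0)
      = ∑ b, Δ b i j := by simp only [hdiag, if_true, mul_one]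
    _ < 0 := hoff i j hij
    _ ≤ ∑ b, Δ b i j * if 0 < Δ b i j then 1 else 0 :=
      sum_nonneg fun b _ => by split_ifs with h <;> [simpa using h.le; simp]

theorem payoffSum_lt_of_not_injective [Fintype κ] (hdiag : ∀ b i, 0 < Δ b i i)
    (hoff : ∀ i j, i ≠ j → ∑ b, Δ b i j < 0) {F : κ → κ} (hF : ¬ F.Injective) :
    payoffSum Δ F F < payoffSum Δ id id := by
  obtain ⟨i₀, j₀, hF₀, hij₀⟩ := Function.not_injective_iff.mp hF
  have hswap : ∀ G : κ → κ, payoffSum Δ G G =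
      ∑ i, ∑ j, ∑ b, Δ b i j * if 0 < Δ b (G i) (G j) then 1 else 0 := fun G => by
    rw [payoffSum, sum_comm]
    simp_rw [sum_comm (γ := ι)]
  rw [hswap, hswap]
  refine sum_lt_sum (fun i _ => sum_le_sum fun j _ => sum_mul_ite_pos_le Δ i j _ _)
    ⟨i₀, mem_univ _, sum_lt_sum (fun j _ => sum_mul_ite_pos_le Δ i₀ j _ _) ⟨j₀, mem_univ _, ?_⟩⟩
  rw [hF₀]
  exact sum_mul_ite_pos_lt_of_ne Δ hdiag hoff hij₀ (F j₀)

end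

/-- Symmetric non-permutation case in the proof of Theorem 2: under Condition 1,
a non-injective strategy played by both agents is strictly worse than truth. -/
theorem cond1_noninjective_strict (m n : ℕ) (hm : 1 ≤ m)
    (Δ : Fin m → Fin n → Fin n → ℝ)
    (hdiag : ∀ b i, 0 < Δ b i i)
    (hoff : ∀ i j, i ≠ j → ∑ b, Δ b i j < 0)
    (S : Fin m → Fin n → Fin n → ℝ)
    (hS : ∀ b i j, S b i j = if 0 < Δ b i j then 1 else 0)
    (E : (Fin n → Fin n) → (Fin n → Fin n) → ℝ)
    (hE : ∀ F G, E F G =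
      (1 / (m : ℝ)) * ∑ b, ∑ i, ∑ j, Δ b i j * S b (F i) (G j))
    (F : Fin n → Fin n) (hF : ¬ Function.Injective F) :
    E F F < E id id := by
  have hE' : ∀ G, E G G = (1 / (m : ℝ)) * payoffSum Δ G G := fun G => by
    simp only [hE, hS, payoffSum]
  rw [hE', hE']
  have hm' : (0 : ℝ) < 1 / m := one_div_pos.mpr (by exact_mod_cast hm)
  exact mul_lt_mul_of_pos_left (payoffSum_lt_of_not_injective Δ hdiag hoff hF) hm'
end

section
/- (CCAH informed truthfulness.) Fix m ≥ 3, n ≥ 1, joint distributions P_b and P_{t',t''} (nonnegative entries summing to 1), and the CCAH delta matrices Δ_b(i,j) = P_b(i,j) − (1/((m−1)(m−2))) Σ_{t' ≠ t'', t' ≠ b, t'' ≠ b} P_{t',t''}(i,j), with score matrices S_b(i,j) = 1 if Δ_b(i,j) > 0 and 0 otherwise, and E(F,G) = (1/m) Σ_b Σ_{i,j} Δ_b(i,j) · S_b(F(i),G(j)). If every Δ_b is symmetric with all entries nonzero, then E(𝕀,𝕀) ≥ E(F,G) for all deterministic F, G : Fin n → Fin n, with strict inequality whenever F is a constant map. 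-/
/-!
Since `S b` is the indicator of `Δ b > 0`, every term `Δ b i j * S b x y` is at most
`max (Δ b i j) 0`, with equality for truthful reports; this gives `E F G ≤ E id id`.
Each `Δ b` has total sum zero, so, being symmetric with nonzero entries, it has a column `j`
with entries of both signs. When `F` is constant, that whole column is scored by the single
value `S b r (G j) ∈ {0, 1}`: either all its positive entries are lost or all its negative ones
are collected, and the inequality becomes strict.
-/

open Finset

section PairCounting

variable {τ : Type*} [Fintype τ] [DecidableEq τ]

theorem sum_sum_ite_ne_ne_ne_eq_sum_offDiag_erase {M : Type*} [AddCommMonoid M] (b : τ) (f : τ → τ → M) :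
    ∑ t', ∑ t'', (if t' ≠ t'' ∧ t' ≠ b ∧ t'' ≠ b then f t' t'' else 0) =
      ∑ p ∈ (univ.erase b).offDiag, f p.1 p.2 := by
  rw [← sum_product' univ univ, ← sum_filter]
  congr 1
  ext ⟨t', t''⟩
  simp only [mem_filter, mem_product, mem_univ, mem_offDiag, mem_erase]
  tauto

theorem card_offDiag_erase (b : τ) :
    #(univ.erase b).offDiag = (Fintype.card τ - 1) * (Fintype.card τ - 2) := by
  rw [offDiag_card, card_erase_of_mem (mem_univ b), card_univ, ← Nat.mul_sub_one]
  rfl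

end PairCounting

/-- Both `P b` and the average of the pair distributions over the `(m - 1)(m - 2)` ordered
pairs of tasks other than `b` have total mass one. -/
theorem sum_sum_delta_eq_zero {τ κ : Type*} [Fintype τ] [DecidableEq τ] [Fintype κ]
    (hτ : 3 ≤ Fintype.card τ) (P : τ → κ → κ → ℝ) (hP : ∀ b, ∑ i, ∑ j, P b i j = 1)
    (Ppair : τ → τ → κ → κ → ℝ)
    (hPpair : ∀ t' t'', t' ≠ t'' → ∑ i, ∑ j, Ppair t' t'' i j = 1)
    (Δ : τ → κ → κ → ℝ)
    (hΔ : ∀ b i j, Δ b i j = P b i j -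
      (1 / (((Fintype.card τ : ℝ) - 1) * ((Fintype.card τ : ℝ) - 2))) *
        ∑ t', ∑ t'', if t' ≠ t'' ∧ t' ≠ b ∧ t'' ≠ b then Ppair t' t'' i j else 0)
    (b : τ) : ∑ i, ∑ j, Δ b i j = 0 := by
  have hcard : ((#(univ.erase b).offDiag : ℕ) : ℝ) =
      ((Fintype.card τ : ℝ) - 1) * ((Fintype.card τ : ℝ) - 2) := by
    rw [card_offDiag_erase, Nat.cast_mul, Nat.cast_sub (by omega), Nat.cast_sub (by omega)]
    norm_num
  have hpairs : ∑ i, ∑ j, ∑ p ∈ (univ.erase b).offDiag, Ppair p.1 p.2 i j =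
      #(univ.erase b).offDiag := by
    rw [sum_comm_cycle, ← nsmul_one, ← sum_const]
    exact sum_congr rfl fun p hp => hPpair p.1 p.2 (mem_offDiag.1 hp).2.2
  have hden : ((Fintype.card τ : ℝ) - 1) * ((Fintype.card τ : ℝ) - 2) ≠ 0 := by
    have : (3 : ℝ) ≤ Fintype.card τ := by exact_mod_cast hτ
    nlinarith
  simp only [hΔ, sum_sub_distrib, ← mul_sum, sum_sum_ite_ne_ne_ne_eq_sum_offDiag_erase, hP, hpairs]
  rw [hcard, one_div_mul_cancel hden, sub_self]

theorem exists_pos_and_exists_neg_of_sum_eq_zero {ι M : Type*} [Fintype ι] [Nonempty ι]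
    [AddCommGroup M] [LinearOrder M] [IsOrderedAddMonoid M] {f : ι → M}
    (hsum : ∑ i, f i = 0) (hf : ∀ i, f i ≠ 0) : (∃ i, 0 < f i) ∧ ∃ i, f i < 0 := by
  have hne : ∃ i ∈ univ, f i ≠ 0 := ⟨Classical.arbitrary ι, mem_univ _, hf _⟩
  obtain ⟨i, -, hi⟩ := exists_pos_of_sum_zero_of_exists_nonzero f hsum hne
  obtain ⟨k, -, hk⟩ := exists_pos_of_sum_zero_of_exists_nonzero (s := univ) (-f)
    (by simp only [Pi.neg_apply, sum_neg_distrib, hsum, neg_zero]) (by simpa using hne)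
  exact ⟨⟨i, hi⟩, ⟨k, by simpa using hk⟩⟩

theorem exists_column_pos_and_neg_of_symm {ι : Type*} [Fintype ι] [Nonempty ι]
    (D : ι → ι → ℝ) (hsymm : ∀ i j, D i j = D j i) (hnz : ∀ i j, D i j ≠ 0)
    (hsum : ∑ i, ∑ j, D i j = 0) : ∃ j, (∃ i, 0 < D i j) ∧ ∃ i, D i j < 0 := by
  obtain ⟨⟨⟨i, j⟩, hpos⟩, ⟨⟨k, l⟩, hneg⟩⟩ :=
    exists_pos_and_exists_neg_of_sum_eq_zero (f := fun p : ι × ι => D p.1 p.2)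
      (by rwa [Fintype.sum_prod_type']) (fun p => hnz p.1 p.2)
  -- the entry `D l j = D j l` is shared by column `j` (holding `D i j > 0`) and column `l`
  -- (holding `D k l < 0`); whatever its sign, one of the two columns is mixed
  rcases (hnz l j).lt_or_gt with hlj | hlj
  · exact ⟨j, ⟨i, hpos⟩, ⟨l, hlj⟩⟩
  · exact ⟨l, ⟨j, hsymm l j ▸ hlj⟩, ⟨k, hneg⟩⟩

theorem mul_le_max_zero {x c : ℝ} (hc₀ : 0 ≤ c) (hc₁ : c ≤ 1) : x * c ≤ max x 0 := by
  rcases le_total x 0 with hx | hx <;> nlinarith [le_max_left x 0, le_max_right x 0]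

theorem mul_ite_pos_eq_max (x : ℝ) : x * (if 0 < x then 1 else 0) = max x 0 := by
  split_ifs with hx
  · rw [mul_one, max_eq_left hx.le]
  · rw [mul_zero, max_eq_right (not_lt.1 hx)]

theorem sum_mul_lt_sum_max_zero {ι : Type*} [Fintype ι] (x : ι → ℝ) {c : ℝ}
    (hc₀ : 0 ≤ c) (hc₁ : c ≤ 1) (hpos : ∃ i, 0 < x i) (hneg : ∃ i, x i < 0) :
    ∑ i, x i * c < ∑ i, max (x i) 0 := by
  refine sum_lt_sum (fun i _ => mul_le_max_zero hc₀ hc₁) ?_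
  rcases hc₁.lt_or_eq with hc | rfl
  · obtain ⟨i, hi⟩ := hpos
    exact ⟨i, mem_univ _, by rw [max_eq_left hi.le]; nlinarith⟩
  · obtain ⟨i, hi⟩ := hneg
    exact ⟨i, mem_univ _, by rwa [mul_one, max_eq_right hi.le]⟩

theorem sum_sum_mul_lt_sum_sum_max_zero {ι : Type*} [Fintype ι] (D : ι → ι → ℝ) (c : ι → ℝ)
    (hc₀ : ∀ j, 0 ≤ c j) (hc₁ : ∀ j, c j ≤ 1)
    (hmixed : ∃ j, (∃ i, 0 < D i j) ∧ ∃ i, D i j < 0) :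
    ∑ i, ∑ j, D i j * c j < ∑ i, ∑ j, max (D i j) 0 := by
  obtain ⟨j₀, hpos, hneg⟩ := hmixed
  rw [sum_comm (f := fun i j => D i j * c j), sum_comm (f := fun i j => max (D i j) 0)]
  exact sum_lt_sum (fun j _ => sum_le_sum fun i _ => mul_le_max_zero (hc₀ j) (hc₁ j))
    ⟨j₀, mem_univ _, sum_mul_lt_sum_max_zero _ (hc₀ j₀) (hc₁ j₀) hpos hneg⟩

theorem ccah_informed_truthful_general (m n : ℕ) (hm : 3 ≤ m)
    (P : Fin m → Fin n → Fin n → ℝ)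
    (hPsum : ∀ k, ∑ i, ∑ j, P k i j = 1)
    (Ppair : Fin m → Fin m → Fin n → Fin n → ℝ)
    (hPpairsum : ∀ t' t'', t' ≠ t'' → ∑ i, ∑ j, Ppair t' t'' i j = 1)
    (Δ : Fin m → Fin n → Fin n → ℝ)
    (hΔ : ∀ b i j, Δ b i j = P b i j -
      (1 / (((m : ℝ) - 1) * ((m : ℝ) - 2))) *
        ∑ t' : Fin m, ∑ t'' : Fin m,
          if t' ≠ t'' ∧ t' ≠ b ∧ t'' ≠ b then Ppair t' t'' i j else 0)
    (S : Fin m → Fin n → Fin n → ℝ)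
    (hS : ∀ b i j, S b i j = if 0 < Δ b i j then 1 else 0)
    (E : (Fin n → Fin n) → (Fin n → Fin n) → ℝ)
    (hE : ∀ F G, E F G =
      (1 / (m : ℝ)) * ∑ b, ∑ i, ∑ j, Δ b i j * S b (F i) (G j))
    (hΔsymm : ∀ b i j, Δ b i j = Δ b j i)
    (hΔnz : ∀ b i j, Δ b i j ≠ 0) :
    (∀ F G : Fin n → Fin n, E F G ≤ E id id) ∧
    (∀ F G : Fin n → Fin n, (∃ r, ∀ i, F i = r) → E F G < E id id) := by
  have hzero : ∀ b, ∑ i, ∑ j, Δ b i j = 0 :=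
    sum_sum_delta_eq_zero (by simpa using hm) P hPsum Ppair hPpairsum Δ
      (by simpa only [Fintype.card_fin] using hΔ)
  have hS₀ : ∀ b x y, 0 ≤ S b x y := fun b x y => by rw [hS]; split_ifs <;> norm_num
  have hS₁ : ∀ b x y, S b x y ≤ 1 := fun b x y => by rw [hS]; split_ifs <;> norm_num
  have hEid : E id id = 1 / m * ∑ b, ∑ i, ∑ j, max (Δ b i j) 0 := by
    simp only [hE, id, hS, mul_ite_pos_eq_max]
  have : Nonempty (Fin m) := ⟨⟨0, by omega⟩⟩
  refine ⟨fun F G => ?_, fun F G ⟨r, hr⟩ => ?_⟩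
  · rw [hE, hEid]
    gcongr with b _ i _ j _
    exact mul_le_max_zero (hS₀ ..) (hS₁ ..)
  · have : Nonempty (Fin n) := ⟨r⟩
    rw [hE, hEid]
    refine mul_lt_mul_of_pos_left (sum_lt_sum_of_nonempty univ_nonempty fun b _ => ?_)
      (by positivity)
    simp only [hr]
    exact sum_sum_mul_lt_sum_sum_max_zero (Δ b) _ (fun _ => hS₀ ..) (fun _ => hS₁ ..)
      (exists_column_pos_and_neg_of_symm (Δ b) (hΔsymm b) (hΔnz b) (hzero b))

/-- Informed truthfulness of the CCAH mechanism. -/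
theorem ccah_informed_truthful (m n : ℕ) (hm : 3 ≤ m) (hn : 1 ≤ n)
    (P : Fin m → Fin n → Fin n → ℝ)
    (hPnonneg : ∀ k i j, 0 ≤ P k i j)
    (hPsum : ∀ k, ∑ i, ∑ j, P k i j = 1)
    (Ppair : Fin m → Fin m → Fin n → Fin n → ℝ)
    (hPpairnonneg : ∀ t' t'', t' ≠ t'' → ∀ i j, 0 ≤ Ppair t' t'' i j)
    (hPpairsum : ∀ t' t'', t' ≠ t'' → ∑ i, ∑ j, Ppair t' t'' i j = 1)
    (Δ : Fin m → Fin n → Fin n → ℝ)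
    (hΔ : ∀ b i j, Δ b i j = P b i j -
      (1 / (((m : ℝ) - 1) * ((m : ℝ) - 2))) *
        ∑ t' : Fin m, ∑ t'' : Fin m,
          if t' ≠ t'' ∧ t' ≠ b ∧ t'' ≠ b then Ppair t' t'' i j else 0)
    (S : Fin m → Fin n → Fin n → ℝ)
    (hS : ∀ b i j, S b i j = if 0 < Δ b i j then 1 else 0)
    (E : (Fin n → Fin n) → (Fin n → Fin n) → ℝ)
    (hE : ∀ F G, E F G =
      (1 / (m : ℝ)) * ∑ b, ∑ i, ∑ j, Δ b i j * S b (F i) (G j))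
    (hΔsymm : ∀ b i j, Δ b i j = Δ b j i)
    (hΔnz : ∀ b i j, Δ b i j ≠ 0) :
    (∀ F G : Fin n → Fin n, E F G ≤ E id id) ∧
    (∀ F G : Fin n → Fin n, (∃ r, ∀ i, F i = r) → E F G < E id id) :=
  ccah_informed_truthful_general m n hm P hPsum Ppair hPpairsum Δ hΔ S hS E hE hΔsymm hΔnz
end

section
/- Let Δ_b, Δ̂_b : Fin n → Fin n → ℝ, b ∈ Fin m, be two families of real matrices, and let S_b(i,j) = 1 if Δ_b(i,j) > 0 else 0, Ŝ_b(i,j) = 1 if Δ̂_b(i,j) > 0 else 0 be their sign matrices. Then |(1/m) Σ_b Σ_{i,j} Δ_b(i,j) · (Ŝ_b(i,j) − S_b(i,j))| ≤ (1/m) Σ_b Σ_{i,j} |Δ̂_b(i,j) − Δ_b(i,j)|. -/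
open Finset

/-! Entrywise, `Δ (Ŝ - S)` vanishes unless `Δ` and `Δ̂` lie on opposite sides of `0`, in which
case `|Δ| ≤ |Δ̂ - Δ|`. Summing with the triangle inequality gives the bound. -/

section

variable {α : Type*} [CommRing α] [LinearOrder α] [IsStrictOrderedRing α]

theorem abs_mul_ite_pos_sub_ite_pos_le (d dhat : α) :
    |d * ((if 0 < dhat then 1 else 0) - if 0 < d then 1 else 0)| ≤ |dhat - d| := by
  rcases lt_or_ge 0 d with hd | hd <;> rcases lt_or_ge 0 dhat with hdhat | hdhat
  · simp [hd, hdhat]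
  · rw [if_neg hdhat.not_gt, if_pos hd, zero_sub, mul_neg_one, abs_neg, abs_of_pos hd,
      abs_of_nonpos (by linarith)]
    linarith
  · rw [if_pos hdhat, if_neg hd.not_gt, sub_zero, mul_one, abs_of_nonpos hd,
      abs_of_pos (by linarith)]
    linarith
  · simp [hd.not_gt, hdhat.not_gt]

theorem Finset.abs_sum_le_sum_of_abs_le {ι : Type*} {s : Finset ι} {f g : ι → α}
    (h : ∀ i ∈ s, |f i| ≤ g i) : |∑ i ∈ s, f i| ≤ ∑ i ∈ s, g i :=
  (abs_sum_le_sum_abs f s).trans (sum_le_sum h)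

end

/-- The change in truthful expected score from replacing the true sign matrices with
estimated sign matrices is bounded by the ℓ¹ error of the estimated delta matrices. -/
theorem sign_matrix_error_bound (m n : ℕ)
    (Δ Δhat : Fin m → Fin n → Fin n → ℝ)
    (S : Fin m → Fin n → Fin n → ℝ)
    (hS : ∀ b i j, S b i j = if 0 < Δ b i j then 1 else 0)
    (Shat : Fin m → Fin n → Fin n → ℝ)
    (hShat : ∀ b i j, Shat b i j = if 0 < Δhat b i j then 1 else 0) :
    |(1 / (m : ℝ)) * ∑ b, ∑ i, ∑ j, Δ b i j * (Shat b i j - S b i j)| ≤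
    (1 / (m : ℝ)) * ∑ b, ∑ i, ∑ j, |Δhat b i j - Δ b i j| := by
  rw [abs_mul, abs_of_nonneg (by positivity : (0 : ℝ) ≤ 1 / m)]
  refine mul_le_mul_of_nonneg_left ?_ (by positivity)
  refine abs_sum_le_sum_of_abs_le fun b _ => abs_sum_le_sum_of_abs_le fun i _ =>
    abs_sum_le_sum_of_abs_le fun j _ => ?_
  rw [hS, hShat]
  exact abs_mul_ite_pos_sub_ite_pos_le _ _
end

section
/- Fix m ≥ 3, n ≥ 1 and ε > 0. Let P_b, T_b : Fin n → Fin n → ℝ (true and estimated joint distributions) with marginals P_b(i) = Σ_j P_b(i,j), P_b'(j) = Σ_i P_b(i,j) and similarly for T_b, where all P_b(i) and all T_b'(j) are nonnegative and Σ_i P_b(i) = Σ_j T_b'(j) = 1 for every b. Define Δ_b(i,j) = P_b(i,j) − (1/((m−1)(m−2))) Σ_{t' ≠ t'', t' ≠ b, t'' ≠ b} P_{t'}(i)·P_{t''}'(j) and Δ̂_b analogously from the T's. If for every b, Σ_{i,j} |P_b(i,j) − T_b(i,j)| ≤ ε/3, Σ_i |P_b(i) − T_b(i)| ≤ ε/3,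 and Σ_j |P_b'(j) − T_b'(j)| ≤ ε/3, then (1/m) Σ_b Σ_{i,j} |Δ̂_b(i,j) − Δ_b(i,j)| ≤ ε. -/
open Finset

/-!
Δ̂_b − Δ_b is T_b − P_b minus the normalized sum, over the (m − 1)(m − 2) ordered pairs of
distinct tasks t' ≠ t'' other than b, of the outer-product differences T_{t'} ⊗ T'_{t''} −
P_{t'} ⊗ P'_{t''}. Since |ab − cd| ≤ |a − c| b + c |b − d| and P_{t'}, T'_{t''} are probability
vectors, each such difference has ℓ¹ norm at most ε/3 + ε/3; the normalization cancels the
number of pairs, so ‖Δ̂_b − Δ_b‖₁ ≤ ε/3 + 2ε/3 for every b.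
-/

lemma abs_mul_sub_mul_le {a b c d : ℝ} (hb : 0 ≤ b) (hc : 0 ≤ c) :
    |a * b - c * d| ≤ |a - c| * b + c * |b - d| := by
  calc |a * b - c * d| = |(a - c) * b + c * (b - d)| := by ring_nf
    _ ≤ |(a - c) * b| + |c * (b - d)| := abs_add_le _ _
    _ = |a - c| * b + c * |b - d| := by rw [abs_mul, abs_mul, abs_of_nonneg hb, abs_of_nonneg hc]

lemma sum_sum_abs_mul_sub_mul_le {ι κ : Type*} [Fintype ι] [Fintype κ] {x x' : ι → ℝ}
    {y y' : κ → ℝ} (hy : ∀ j, 0 ≤ y j) (hx' : ∀ i, 0 ≤ x' i) :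
    ∑ i, ∑ j, |x i * y j - x' i * y' j|
      ≤ (∑ i, |x i - x' i|) * ∑ j, y j + (∑ i, x' i) * ∑ j, |y j - y' j| := by
  simp only [sum_mul_sum, ← sum_add_distrib]
  gcongr with i _ j _
  exact abs_mul_sub_mul_le (hy j) (hx' i)

lemma abs_sub_mul_sum_sub_le {κ : Type*} (s : Finset κ) {c : ℝ} (hc : 0 ≤ c) (a b : ℝ)
    (f g : κ → ℝ) :
    |(a - c * ∑ p ∈ s, f p) - (b - c * ∑ p ∈ s, g p)| ≤ |a - b| + c * ∑ p ∈ s, |f p - g p| := by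
  calc |(a - c * ∑ p ∈ s, f p) - (b - c * ∑ p ∈ s, g p)|
      = |(a - b) - c * ∑ p ∈ s, (f p - g p)| := by rw [sum_sub_distrib]; ring_nf
    _ ≤ |a - b| + |c * ∑ p ∈ s, (f p - g p)| := abs_sub _ _
    _ ≤ |a - b| + c * ∑ p ∈ s, |f p - g p| := by
      rw [abs_mul, abs_of_nonneg hc]
      gcongr
      exact abs_sum_le_sum_abs _ _

lemma sum_ite_ne_ne_eq_sum_offDiag_erase {α M : Type*} [Fintype α] [DecidableEq α]
    [AddCommMonoid M] (b : α) (f : α → α → M) :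
    ∑ t', ∑ t'', (if t' ≠ t'' ∧ t' ≠ b ∧ t'' ≠ b then f t' t'' else 0)
      = ∑ p ∈ (univ.erase b).offDiag, f p.1 p.2 := by
  rw [← sum_product', ← sum_filter]
  congr 1
  ext ⟨t', t''⟩
  simp only [mem_filter, mem_product, mem_univ, mem_offDiag, mem_erase]
  tauto

lemma card_offDiag_univ_erase {α : Type*} [Fintype α] [DecidableEq α] (b : α) :
    ((univ.erase b).offDiag.card : ℝ) = (Fintype.card α - 1) * (Fintype.card α - 2) := by
  have hpos : 1 ≤ Fintype.card α := Fintype.card_pos_iff.mpr ⟨b⟩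
  rw [offDiag_card, card_erase_of_mem (mem_univ b), card_univ, Nat.cast_sub (Nat.le_mul_self _),
    Nat.cast_mul, Nat.cast_sub hpos]
  push_cast; ring

lemma sum_sum_abs_sub_mul_sum_sub_le {ι κ π : Type*} [Fintype ι] [Fintype κ] (s : Finset π)
    {c δ : ℝ} (hc : 0 ≤ c) (A B : ι → κ → ℝ) (F G : π → ι → κ → ℝ)
    (hFG : ∀ p ∈ s, ∑ i, ∑ j, |F p i j - G p i j| ≤ δ) :
    ∑ i, ∑ j, |(A i j - c * ∑ p ∈ s, F p i j) - (B i j - c * ∑ p ∈ s, G p i j)|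
      ≤ ∑ i, ∑ j, |A i j - B i j| + c * (s.card * δ) := by
  calc ∑ i, ∑ j, |(A i j - c * ∑ p ∈ s, F p i j) - (B i j - c * ∑ p ∈ s, G p i j)|
      ≤ ∑ i, ∑ j, (|A i j - B i j| + c * ∑ p ∈ s, |F p i j - G p i j|) := by
        gcongr with i _ j _
        exact abs_sub_mul_sum_sub_le s hc _ _ _ _
    _ = ∑ i, ∑ j, |A i j - B i j| + c * ∑ p ∈ s, ∑ i, ∑ j, |F p i j - G p i j| := by
        simp only [sum_add_distrib, mul_sum]
        congr 1
        exact (sum_congr rfl fun i _ => sum_comm).trans sum_comm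
    _ ≤ ∑ i, ∑ j, |A i j - B i j| + c * (s.card * δ) := by
        gcongr
        simpa using sum_le_card_nsmul s _ δ hFG

theorem cah_delta_l1_estimation_general (m n : ℕ) (hm : 3 ≤ m) (ε : ℝ)
    (P T : Fin m → Fin n → Fin n → ℝ)
    (margLP margRP margLT margRT : Fin m → Fin n → ℝ)
    (hLPnonneg : ∀ b i, 0 ≤ margLP b i)
    (hRTnonneg : ∀ b j, 0 ≤ margRT b j)
    (hLPsum : ∀ b, ∑ i, margLP b i = 1)
    (hRTsum : ∀ b, ∑ j, margRT b j = 1)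
    (Δ : Fin m → Fin n → Fin n → ℝ)
    (hΔ : ∀ b i j, Δ b i j = P b i j -
      (1 / (((m : ℝ) - 1) * ((m : ℝ) - 2))) *
        ∑ t' : Fin m, ∑ t'' : Fin m,
          if t' ≠ t'' ∧ t' ≠ b ∧ t'' ≠ b then margLP t' i * margRP t'' j else 0)
    (Δhat : Fin m → Fin n → Fin n → ℝ)
    (hΔhat : ∀ b i j, Δhat b i j = T b i j -
      (1 / (((m : ℝ) - 1) * ((m : ℝ) - 2))) *
        ∑ t' : Fin m, ∑ t'' : Fin m,
          if t' ≠ t'' ∧ t' ≠ b ∧ t'' ≠ b then margLT t' i * margRT t'' j else 0)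
    (hjoint : ∀ b, ∑ i, ∑ j, |P b i j - T b i j| ≤ ε / 3)
    (hleft : ∀ b, ∑ i, |margLP b i - margLT b i| ≤ ε / 3)
    (hright : ∀ b, ∑ j, |margRP b j - margRT b j| ≤ ε / 3) :
    (1 / (m : ℝ)) * ∑ b, ∑ i, ∑ j, |Δhat b i j - Δ b i j| ≤ ε := by
  have hm' : (3 : ℝ) ≤ m := by exact_mod_cast hm
  set c := 1 / (((m : ℝ) - 1) * ((m : ℝ) - 2))
  have hden : 0 < ((m : ℝ) - 1) * ((m : ℝ) - 2) := by nlinarith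
  have hc : 0 ≤ c := (one_div_pos.mpr hden).le
  have hpairs (b : Fin m) : c * ((univ.erase b).offDiag.card * (2 * ε / 3)) = 2 * ε / 3 := by
    rw [card_offDiag_univ_erase, Fintype.card_fin, ← mul_assoc, one_div_mul_cancel hden.ne', one_mul]
  have hpair (t' t'' : Fin m) :
      ∑ i, ∑ j, |margLT t' i * margRT t'' j - margLP t' i * margRP t'' j| ≤ 2 * ε / 3 := by
    calc _ ≤ (∑ i, |margLT t' i - margLP t' i|) * ∑ j, margRT t'' j
          + (∑ i, margLP t' i) * ∑ j, |margRT t'' j - margRP t'' j| :=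
          sum_sum_abs_mul_sub_mul_le (hRTnonneg t'') (hLPnonneg t')
      _ ≤ ε / 3 * 1 + 1 * (ε / 3) := by
          rw [hRTsum, hLPsum]
          gcongr
          · simpa only [abs_sub_comm] using hleft t'
          · simpa only [abs_sub_comm] using hright t''
      _ = 2 * ε / 3 := by ring
  have hb (b : Fin m) : ∑ i, ∑ j, |Δhat b i j - Δ b i j| ≤ ε := by
    simp only [hΔ, hΔhat, sum_ite_ne_ne_eq_sum_offDiag_erase b]
    calc _ ≤ ∑ i, ∑ j, |T b i j - P b i j| + c * ((univ.erase b).offDiag.card * (2 * ε / 3)) :=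
          sum_sum_abs_sub_mul_sum_sub_le _ hc _ _ _ _ fun p _ => hpair p.1 p.2
      _ ≤ ε / 3 + 2 * ε / 3 := by
          rw [hpairs]
          gcongr
          simpa only [abs_sub_comm] using hjoint b
      _ = ε := by ring
  calc (1 / (m : ℝ)) * ∑ b, ∑ i, ∑ j, |Δhat b i j - Δ b i j| ≤ (1 / m) * (m * ε) := by
        gcongr
        simpa using sum_le_card_nsmul univ _ ε fun b _ => hb b
    _ = ε := by field_simp

/-- ℓ¹ estimation bound for the CAH delta matrices: if the joint distributions and
both marginals are each estimated within ℓ¹ error ε/3, the average ℓ¹ error of the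
delta matrices is at most ε. -/
theorem cah_delta_l1_estimation (m n : ℕ) (hm : 3 ≤ m) (hn : 1 ≤ n) (ε : ℝ) (hε : 0 < ε)
    (P T : Fin m → Fin n → Fin n → ℝ)
    (margLP margRP margLT margRT : Fin m → Fin n → ℝ)
    (hmargLP : ∀ b i, margLP b i = ∑ j, P b i j)
    (hmargRP : ∀ b j, margRP b j = ∑ i, P b i j)
    (hmargLT : ∀ b i, margLT b i = ∑ j, T b i j)
    (hmargRT : ∀ b j, margRT b j = ∑ i, T b i j)
    (hLPnonneg : ∀ b i, 0 ≤ margLP b i)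
    (hRTnonneg : ∀ b j, 0 ≤ margRT b j)
    (hLPsum : ∀ b, ∑ i, margLP b i = 1)
    (hRTsum : ∀ b, ∑ j, margRT b j = 1)
    (Δ : Fin m → Fin n → Fin n → ℝ)
    (hΔ : ∀ b i j, Δ b i j = P b i j -
      (1 / (((m : ℝ) - 1) * ((m : ℝ) - 2))) *
        ∑ t' : Fin m, ∑ t'' : Fin m,
          if t' ≠ t'' ∧ t' ≠ b ∧ t'' ≠ b then margLP t' i * margRP t'' j else 0)
    (Δhat : Fin m → Fin n → Fin n → ℝ)
    (hΔhat : ∀ b i j, Δhat b i j = T b i j -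
      (1 / (((m : ℝ) - 1) * ((m : ℝ) - 2))) *
        ∑ t' : Fin m, ∑ t'' : Fin m,
          if t' ≠ t'' ∧ t' ≠ b ∧ t'' ≠ b then margLT t' i * margRT t'' j else 0)
    (hjoint : ∀ b, ∑ i, ∑ j, |P b i j - T b i j| ≤ ε / 3)
    (hleft : ∀ b, ∑ i, |margLP b i - margLT b i| ≤ ε / 3)
    (hright : ∀ b, ∑ j, |margRP b j - margRT b j| ≤ ε / 3) :
    (1 / (m : ℝ)) * ∑ b, ∑ i, ∑ j, |Δhat b i j - Δ b i j| ≤ ε :=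
  cah_delta_l1_estimation_general m n hm ε P T margLP margRP margLT margRT hLPnonneg hRTnonneg
    hLPsum hRTsum Δ hΔ Δhat hΔhat hjoint hleft hright
end

section
/- (Deterministic core of Theorem 3: approximate informed truthfulness of CAHR.) Fix m ≥ 3, n ≥ 1 and ε > 0. Let P_b and T_b be true and estimated joint distributions as in the setting (nonnegative, joints summing to 1, marginals summing to 1) with Δ_b, Δ̂_b the corresponding CAH delta matrices, Ŝ_b(i,j) = 1 if Δ̂_b(i,j) > 0 else 0, and E(Ŝ,F,G) = (1/m) Σ_b Σ_{i,j} Δ_b(i,j) · Ŝ_b(F(i),G(j)). If for every b, Σ_{i,j} |P_b(i,j) − T_b(i,j)| ≤ ε/3 and both marginal ℓ¹ errors Σ_i |P_b(i) − T_b(i)| and Σ_j |P_b'(j) − T_b'(j)| are at most ε/3, then for all deterministic strategies F, G : Fin n → Fin n, E(Ŝ,𝕀,𝕀) ≥ E(Ŝ,F,G) − ε. -/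
/-!
Each product term of the CAH average moves by at most `‖P(t') - T(t')‖₁ + ‖P'(t'') - T'(t'')‖₁`
in `ℓ¹`, because the factors it is multiplied with are probability vectors; with the
normalisation `1 / ((m - 1)(m - 2))` being one over the number of pairs, `‖Δ_b - Δ̂_b‖₁ ≤ ε`.
The sign matrix `Ŝ_b` maximises `⟨Δ̂_b, X⟩` over all `X ∈ [0, 1]ⁿˣⁿ`, so a strategy `(F, G)` can
gain at most `⟨Δ_b - Δ̂_b, Ŝ_b ∘ (F, G) - Ŝ_b⟩ ≤ ‖Δ_b - Δ̂_b‖₁` over truthful reporting.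
-/

open Finset

section Pairs

variable {ι : Type*} [Fintype ι] [DecidableEq ι]

theorem sum_sum_ite_avoiding_eq_sum_offDiag {M : Type*} [AddCommMonoid M] (b : ι) (f : ι → ι → M) :
    (∑ t', ∑ t'', if t' ≠ t'' ∧ t' ≠ b ∧ t'' ≠ b then f t' t'' else 0) =
      ∑ p ∈ (univ.erase b).offDiag, f p.1 p.2 := by
  rw [← sum_product', ← sum_filter]
  congr 1
  ext ⟨t', t''⟩
  simp only [mem_filter, mem_product, mem_univ, mem_offDiag, mem_erase]
  tauto

theorem card_offDiag_erase_univ (b : ι) :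
    (#(univ.erase b).offDiag : ℝ) = ((Fintype.card ι : ℝ) - 1) * ((Fintype.card ι : ℝ) - 2) := by
  have hpos : 1 ≤ Fintype.card ι := Fintype.card_pos_iff.mpr ⟨b⟩
  rw [offDiag_card, card_erase_of_mem (mem_univ b), card_univ,
    Nat.cast_sub (Nat.le_mul_self _), Nat.cast_mul, Nat.cast_sub hpos]
  push_cast
  ring

end Pairs

theorem sum_abs_mul_sub_mul_le {α β : Type*} [Fintype α] [Fintype β] (p p' : α → ℝ) (q q' : β → ℝ)
    (hq : ∀ j, 0 ≤ q j) (hp' : ∀ i, 0 ≤ p' i) :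
    ∑ i, ∑ j, |p i * q j - p' i * q' j| ≤
      (∑ i, |p i - p' i|) * ∑ j, q j + (∑ i, p' i) * ∑ j, |q j - q' j| := by
  have hpt : ∀ i j, |p i * q j - p' i * q' j| ≤ |p i - p' i| * q j + p' i * |q j - q' j| := by
    intro i j
    calc |p i * q j - p' i * q' j| = |(p i - p' i) * q j + p' i * (q j - q' j)| := by ring_nf
      _ ≤ |(p i - p' i) * q j| + |p' i * (q j - q' j)| := abs_add_le _ _
      _ = _ := by rw [abs_mul, abs_mul, abs_of_nonneg (hq j), abs_of_nonneg (hp' i)]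
  calc ∑ i, ∑ j, |p i * q j - p' i * q' j|
      ≤ ∑ i, ∑ j, (|p i - p' i| * q j + p' i * |q j - q' j|) :=
        sum_le_sum fun i _ => sum_le_sum fun j _ => hpt i j
    _ = _ := by simp only [sum_add_distrib, ← mul_sum, ← sum_mul]

theorem sum_abs_sum_sub_sum_le {κ α β : Type*} [Fintype α] [Fintype β] (S : Finset κ)
    (f g : κ → α → β → ℝ) :
    ∑ i, ∑ j, |∑ k ∈ S, f k i j - ∑ k ∈ S, g k i j| ≤ ∑ k ∈ S, ∑ i, ∑ j, |f k i j - g k i j| := by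
  calc ∑ i, ∑ j, |∑ k ∈ S, f k i j - ∑ k ∈ S, g k i j|
      ≤ ∑ i, ∑ j, ∑ k ∈ S, |f k i j - g k i j| := by
        gcongr with i _ j _
        rw [← sum_sub_distrib]
        exact abs_sum_le_sum_abs _ _
    _ = _ := by simp only [sum_comm (s := S) (t := univ)]

theorem mul_le_mul_ite_pos_add_abs_sub (d e x : ℝ) (hx₀ : 0 ≤ x) (hx₁ : x ≤ 1) :
    d * x ≤ d * (if 0 < e then 1 else 0) + |d - e| := by
  rcases abs_cases (d - e) with ⟨h, _⟩ | ⟨h, _⟩ <;> split_ifs <;> nlinarith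

theorem sum_mul_le_sum_mul_ite_pos_add {α β : Type*} [Fintype α] [Fintype β] (D D' X : α → β → ℝ)
    (hX₀ : ∀ i j, 0 ≤ X i j) (hX₁ : ∀ i j, X i j ≤ 1) :
    ∑ i, ∑ j, D i j * X i j ≤
      ∑ i, ∑ j, D i j * (if 0 < D' i j then 1 else 0) + ∑ i, ∑ j, |D i j - D' i j| := by
  simp only [← sum_add_distrib]
  gcongr with i _ j _
  exact mul_le_mul_ite_pos_add_abs_sub _ _ _ (hX₀ i j) (hX₁ i j)

section CAH

variable {ι α β : Type*} [Fintype ι] [DecidableEq ι] [Fintype α] [Fintype β]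

def cahDelta (c : ℝ) (J : α → β → ℝ) (L : ι → α → ℝ) (R : ι → β → ℝ) (b : ι) (i : α) (j : β) : ℝ :=
  J i j - c * ∑ t', ∑ t'', if t' ≠ t'' ∧ t' ≠ b ∧ t'' ≠ b then L t' i * R t'' j else 0

theorem sum_abs_cahDelta_sub_le {c δJ δL δR : ℝ}
    (hc : c * (((Fintype.card ι : ℝ) - 1) * ((Fintype.card ι : ℝ) - 2)) = 1)
    (J J' : α → β → ℝ) (L L' : ι → α → ℝ) (R R' : ι → β → ℝ) (b : ι)
    (hR : ∀ t j, 0 ≤ R t j) (hRsum : ∀ t, ∑ j, R t j = 1)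
    (hL' : ∀ t i, 0 ≤ L' t i) (hL'sum : ∀ t, ∑ i, L' t i = 1)
    (hJ : ∑ i, ∑ j, |J i j - J' i j| ≤ δJ)
    (hL : ∀ t, ∑ i, |L t i - L' t i| ≤ δL) (hR' : ∀ t, ∑ j, |R t j - R' t j| ≤ δR) :
    ∑ i, ∑ j, |cahDelta c J L R b i j - cahDelta c J' L' R' b i j| ≤ δJ + (δL + δR) := by
  set S := (univ.erase b).offDiag
  have hpair : ∀ p ∈ S, ∑ i, ∑ j, |L p.1 i * R p.2 j - L' p.1 i * R' p.2 j| ≤ δL + δR := by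
    intro p _
    have := sum_abs_mul_sub_mul_le (L p.1) (L' p.1) (R p.2) (R' p.2) (hR p.2) (hL' p.1)
    rw [hRsum, hL'sum] at this
    linarith [hL p.1, hR' p.2]
  have hmix : ∑ i, ∑ j, |∑ p ∈ S, L p.1 i * R p.2 j - ∑ p ∈ S, L' p.1 i * R' p.2 j| ≤
      #S * (δL + δR) :=
    (sum_abs_sum_sub_sum_le S _ _).trans
      (by simpa only [nsmul_eq_mul] using sum_le_card_nsmul S _ _ hpair)
  have hpt : ∀ i j, |cahDelta c J L R b i j - cahDelta c J' L' R' b i j| ≤ |J i j - J' i j| +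
      |c| * |∑ p ∈ S, L p.1 i * R p.2 j - ∑ p ∈ S, L' p.1 i * R' p.2 j| := by
    intro i j
    calc |cahDelta c J L R b i j - cahDelta c J' L' R' b i j|
        = |(J i j - J' i j) - c * (∑ p ∈ S, L p.1 i * R p.2 j - ∑ p ∈ S, L' p.1 i * R' p.2 j)| := by
          simp only [cahDelta, sum_sum_ite_avoiding_eq_sum_offDiag]
          congr 1
          ring
      _ ≤ _ := by rw [← abs_mul]; exact abs_sub _ _
  calc ∑ i, ∑ j, |cahDelta c J L R b i j - cahDelta c J' L' R' b i j|
      ≤ ∑ i, ∑ j, |J i j - J' i j| +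
        |c| * ∑ i, ∑ j, |∑ p ∈ S, L p.1 i * R p.2 j - ∑ p ∈ S, L' p.1 i * R' p.2 j| := by
        simp only [mul_sum, ← sum_add_distrib]
        exact sum_le_sum fun i _ => sum_le_sum fun j _ => hpt i j
    _ ≤ δJ + |c| * (#S * (δL + δR)) := by gcongr
    _ = δJ + (δL + δR) := by
        rw [← mul_assoc, ← Nat.abs_cast, ← abs_mul, card_offDiag_erase_univ, hc, abs_one, one_mul]

end CAH

theorem cahr_approx_informed_truthful_general (m n : ℕ) (hm : 3 ≤ m)
    (ε : ℝ)
    (P T : Fin m → Fin n → Fin n → ℝ)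
    (hPnonneg : ∀ b i j, 0 ≤ P b i j)
    (hPsum : ∀ b, ∑ i, ∑ j, P b i j = 1)
    (hTnonneg : ∀ b i j, 0 ≤ T b i j)
    (hTsum : ∀ b, ∑ i, ∑ j, T b i j = 1)
    (margLP margRP margLT margRT : Fin m → Fin n → ℝ)
    (hmargRP : ∀ b j, margRP b j = ∑ i, P b i j)
    (hmargLT : ∀ b i, margLT b i = ∑ j, T b i j)
    (Δ : Fin m → Fin n → Fin n → ℝ)
    (hΔ : ∀ b i j, Δ b i j = P b i j -
      (1 / (((m : ℝ) - 1) * ((m : ℝ) - 2))) *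
        ∑ t' : Fin m, ∑ t'' : Fin m,
          if t' ≠ t'' ∧ t' ≠ b ∧ t'' ≠ b then margLP t' i * margRP t'' j else 0)
    (Δhat : Fin m → Fin n → Fin n → ℝ)
    (hΔhat : ∀ b i j, Δhat b i j = T b i j -
      (1 / (((m : ℝ) - 1) * ((m : ℝ) - 2))) *
        ∑ t' : Fin m, ∑ t'' : Fin m,
          if t' ≠ t'' ∧ t' ≠ b ∧ t'' ≠ b then margLT t' i * margRT t'' j else 0)
    (Shat : Fin m → Fin n → Fin n → ℝ)
    (hShat : ∀ b i j, Shat b i j = if 0 < Δhat b i j then 1 else 0)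
    (E : (Fin n → Fin n) → (Fin n → Fin n) → ℝ)
    (hE : ∀ F G, E F G =
      (1 / (m : ℝ)) * ∑ b, ∑ i, ∑ j, Δ b i j * Shat b (F i) (G j))
    (hjoint : ∀ b, ∑ i, ∑ j, |P b i j - T b i j| ≤ ε / 3)
    (hleft : ∀ b, ∑ i, |margLP b i - margLT b i| ≤ ε / 3)
    (hright : ∀ b, ∑ j, |margRP b j - margRT b j| ≤ ε / 3) :
    ∀ F G : Fin n → Fin n, E id id ≥ E F G - ε := by
  intro F G
  have hm₀ : (0 : ℝ) < m := by positivity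
  have hc : 1 / (((m : ℝ) - 1) * ((m : ℝ) - 2)) *
      (((Fintype.card (Fin m) : ℝ) - 1) * ((Fintype.card (Fin m) : ℝ) - 2)) = 1 := by
    have : (3 : ℝ) ≤ m := by exact_mod_cast hm
    rw [Fintype.card_fin, one_div_mul_cancel (by nlinarith)]
  have hRsum : ∀ t, ∑ j, margRP t j = 1 := fun t => by simp only [hmargRP, sum_comm, hPsum]
  have hLsum : ∀ t, ∑ i, margLT t i = 1 := fun t => by simp only [hmargLT, hTsum]
  have hΔc : ∀ b i j, Δ b i j = cahDelta _ (P b) margLP margRP b i j := hΔ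
  have hΔhatc : ∀ b i j, Δhat b i j = cahDelta _ (T b) margLT margRT b i j := hΔhat
  have hclose : ∀ b, ∑ i, ∑ j, |Δ b i j - Δhat b i j| ≤ ε := fun b => by
    simp only [hΔc, hΔhatc]
    linarith [sum_abs_cahDelta_sub_le hc (P b) (T b) margLP margLT margRP margRT b
      (fun t j => hmargRP t j ▸ sum_nonneg fun i _ => hPnonneg t i j) hRsum
      (fun t i => hmargLT t i ▸ sum_nonneg fun j _ => hTnonneg t i j) hLsum (hjoint b) hleft hright]
  have hgain : ∀ b, ∑ i, ∑ j, Δ b i j * Shat b (F i) (G j) ≤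
      ∑ i, ∑ j, Δ b i j * Shat b i j + ε := fun b => by
    have := sum_mul_le_sum_mul_ite_pos_add (Δ b) (Δhat b) (fun i j => Shat b (F i) (G j))
      (fun i j => by rw [hShat]; split_ifs <;> norm_num)
      (fun i j => by rw [hShat]; split_ifs <;> norm_num)
    simp only [← hShat] at this
    linarith [hclose b]
  rw [ge_iff_le, sub_le_iff_le_add, hE, hE]
  calc 1 / (m : ℝ) * ∑ b, ∑ i, ∑ j, Δ b i j * Shat b (F i) (G j)
      ≤ 1 / (m : ℝ) * ∑ b : Fin m, (∑ i, ∑ j, Δ b i j * Shat b i j + ε) := by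
        gcongr with b
        exact hgain b
    _ = _ := by
      rw [sum_add_distrib, sum_const, card_univ, Fintype.card_fin, nsmul_eq_mul]
      field_simp
      rfl

/-- Deterministic core of Theorem 3: approximate informed truthfulness of CAHR.
If the estimated joint and marginal distributions are each within ℓ¹ error ε/3 of the
truth, truthful reporting is within ε of optimal under the estimated score matrices. -/
theorem cahr_approx_informed_truthful (m n : ℕ) (hm : 3 ≤ m) (hn : 1 ≤ n)
    (ε : ℝ) (hε : 0 < ε)
    (P T : Fin m → Fin n → Fin n → ℝ)
    (hPnonneg : ∀ b i j, 0 ≤ P b i j)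
    (hPsum : ∀ b, ∑ i, ∑ j, P b i j = 1)
    (hTnonneg : ∀ b i j, 0 ≤ T b i j)
    (hTsum : ∀ b, ∑ i, ∑ j, T b i j = 1)
    (margLP margRP margLT margRT : Fin m → Fin n → ℝ)
    (hmargLP : ∀ b i, margLP b i = ∑ j, P b i j)
    (hmargRP : ∀ b j, margRP b j = ∑ i, P b i j)
    (hmargLT : ∀ b i, margLT b i = ∑ j, T b i j)
    (hmargRT : ∀ b j, margRT b j = ∑ i, T b i j)
    (Δ : Fin m → Fin n → Fin n → ℝ)
    (hΔ : ∀ b i j, Δ b i j = P b i j -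
      (1 / (((m : ℝ) - 1) * ((m : ℝ) - 2))) *
        ∑ t' : Fin m, ∑ t'' : Fin m,
          if t' ≠ t'' ∧ t' ≠ b ∧ t'' ≠ b then margLP t' i * margRP t'' j else 0)
    (Δhat : Fin m → Fin n → Fin n → ℝ)
    (hΔhat : ∀ b i j, Δhat b i j = T b i j -
      (1 / (((m : ℝ) - 1) * ((m : ℝ) - 2))) *
        ∑ t' : Fin m, ∑ t'' : Fin m,
          if t' ≠ t'' ∧ t' ≠ b ∧ t'' ≠ b then margLT t' i * margRT t'' j else 0)
    (Shat : Fin m → Fin n → Fin n → ℝ)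
    (hShat : ∀ b i j, Shat b i j = if 0 < Δhat b i j then 1 else 0)
    (E : (Fin n → Fin n) → (Fin n → Fin n) → ℝ)
    (hE : ∀ F G, E F G =
      (1 / (m : ℝ)) * ∑ b, ∑ i, ∑ j, Δ b i j * Shat b (F i) (G j))
    (hjoint : ∀ b, ∑ i, ∑ j, |P b i j - T b i j| ≤ ε / 3)
    (hleft : ∀ b, ∑ i, |margLP b i - margLT b i| ≤ ε / 3)
    (hright : ∀ b, ∑ j, |margRP b j - margRT b j| ≤ ε / 3) :
    ∀ F G : Fin n → Fin n, E id id ≥ E F G - ε :=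
  cahr_approx_informed_truthful_general m n hm ε P T hPnonneg hPsum hTnonneg hTsum margLP margRP
    margLT margRT hmargRP hmargLT Δ hΔ Δhat hΔhat Shat hShat E hE hjoint hleft hright
end
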